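/- arXiv:2604.25198 — 4 statements merged into one kernel-verified Lean document; each statement's English description precedes it below -/
import Mathlib

section
/- Let Γ be a group acting on a group G by automorphisms, let Z be a Γ-stable central subgroup of G, let Ḡ = G/Z with the induced Γ-action, and let ε be an automorphism of G commuting with the Γ-action and preserving Z. Let z : Γ → G be a 1-cocycle with image z̄ : Γ → Ḡ. Suppose g₀ ∈ G satisfies ^{ḡ₀} z̄ = z̄ in Z^1(Γ, Ḡ) (where ḡ₀ is the image of g₀), and suppose ḡ ∈ Ḡ with lift g ∈ G satisfies ^{ḡ} ε(z̄) = z̄. Then: (1) the function y(σ) = z(σ)·(g ε(z(σ)) σ(g)^{-1})^{-1} takes values in Z and is a 1-cocycle Γ → Z; (2) with δ_z(g ⋊ ε) := ε^{-1}[y] ∈ H^1(Γ, Z) and δ_z(g₀) := [z · (^{g₀}z)^{-1}] ∈ H^1(Γ,Z), one has δ_z(g₀g ⋊ ε) = ε^{-1}(δ_z(g₀)) · δ_z(g ⋊ ε) in H^1(Γ, Z). -/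
private lemma aux1 {G : Type*} [Group G] (u v A B : G)
    (h1 : B * u = u * B) (h2 : A * B = B * A) :
    u * v * (A⁻¹ * u * B⁻¹ * v)⁻¹ = A * B := by
  calc u * v * (A⁻¹ * u * B⁻¹ * v)⁻¹ = (u * B) * u⁻¹ * A := by group
    _ = (B * u) * u⁻¹ * A := by rw [← h1]
    _ = B * A := by group
    _ = A * B := h2.symm

private lemma aux2 {G : Type*} [Group G] (u g₀ g X q p : G)
    (hc : (u * (g * X * p⁻¹)⁻¹) * g₀ = g₀ * (u * (g * X * p⁻¹)⁻¹)) :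
    u * (g₀ * g * X * (q * p)⁻¹)⁻¹
      = (u * (g₀ * u * q⁻¹)⁻¹) * (u * (g * X * p⁻¹)⁻¹) := by
  have hC : Commute (u * (g * X * p⁻¹)⁻¹) g₀ := hc
  have h2 : g₀ * (u * (g * X * p⁻¹)⁻¹)⁻¹ = (u * (g * X * p⁻¹)⁻¹)⁻¹ * g₀ :=
    hC.inv_left.eq.symm
  calc u * (g₀ * g * X * (q * p)⁻¹)⁻¹
      = u * ((g₀ * (u * (g * X * p⁻¹)⁻¹)⁻¹) * u * q⁻¹)⁻¹ := by group
    _ = u * (((u * (g * X * p⁻¹)⁻¹)⁻¹ * g₀) * u * q⁻¹)⁻¹ := by rw [h2]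
    _ = (u * (g₀ * u * q⁻¹)⁻¹) * (u * (g * X * p⁻¹)⁻¹) := by group

/-- Setting: `Γ` acts on `G`, `Z ≤ Z(G)` is `Γ`-stable, `ε ∈ Aut(G)` commutes
with the `Γ`-action and preserves `Z`, and `z : Γ → G` is a 1-cocycle.
Given `g₀` with `^{ḡ₀} z̄ = z̄` and `g` with `^{ḡ} ε(z̄) = z̄` (expressed via
membership in `Z`), then:
(1) `y(σ) = z(σ) · (g ε(z(σ)) (σ•g)⁻¹)⁻¹` takes values in `Z` and is a
1-cocycle `Γ → Z`;
(2) `δ_z(g₀g ⋊ ε) = ε⁻¹(δ_z(g₀)) · δ_z(g ⋊ ε)` in `H¹(Γ, Z)`, i.e. the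
corresponding `Z`-valued cocycles differ by a coboundary `σ ↦ c⁻¹ (σ • c)`
with `c ∈ Z`. -/
theorem delta_z_twist_formula {Γ G : Type*} [Group Γ] [Group G]
    [MulDistribMulAction Γ G]
    (Z : Subgroup G) (hZc : Z ≤ Subgroup.center G)
    (hZs : ∀ (σ : Γ), ∀ x ∈ Z, σ • x ∈ Z)
    (ε : G ≃* G) (hεΓ : ∀ (σ : Γ) (x : G), ε (σ • x) = σ • ε x)
    (hεZ : ∀ x : G, x ∈ Z ↔ ε x ∈ Z)
    (z : Γ → G) (hz : ∀ σ τ : Γ, z (σ * τ) = z σ * σ • z τ)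
    (g₀ g : G)
    (hg₀ : ∀ σ : Γ, z σ * (g₀ * z σ * (σ • g₀)⁻¹)⁻¹ ∈ Z)
    (hg : ∀ σ : Γ, z σ * (g * ε (z σ) * (σ • g)⁻¹)⁻¹ ∈ Z) :
    ((∀ σ : Γ, z σ * (g * ε (z σ) * (σ • g)⁻¹)⁻¹ ∈ Z) ∧
      (∀ σ τ : Γ, z (σ * τ) * (g * ε (z (σ * τ)) * ((σ * τ) • g)⁻¹)⁻¹
        = (z σ * (g * ε (z σ) * (σ • g)⁻¹)⁻¹)
          * σ • (z τ * (g * ε (z τ) * (τ • g)⁻¹)⁻¹))) ∧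
    (∃ c ∈ Z, ∀ σ : Γ,
      ε.symm (z σ * ((g₀ * g) * ε (z σ) * (σ • (g₀ * g))⁻¹)⁻¹)
        = ε.symm (z σ * (g₀ * z σ * (σ • g₀)⁻¹)⁻¹)
          * ε.symm (z σ * (g * ε (z σ) * (σ • g)⁻¹)⁻¹)
          * (c⁻¹ * σ • c)) := by
  have comm : ∀ x ∈ Z, ∀ y : G, x * y = y * x := fun x hx y =>
    (Subgroup.mem_center_iff.mp (hZc hx) y).symm
  constructor
  · refine ⟨hg, fun σ τ => ?_⟩
    have hBZ : σ • (z τ * (g * ε (z τ) * (τ • g)⁻¹)⁻¹) ∈ Z := hZs σ _ (hg τ)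
    have key : g * ε (z (σ * τ)) * ((σ * τ) • g)⁻¹
        = (z σ * (g * ε (z σ) * (σ • g)⁻¹)⁻¹)⁻¹ * z σ
          * (σ • (z τ * (g * ε (z τ) * (τ • g)⁻¹)⁻¹))⁻¹ * σ • z τ := by
      rw [hz σ τ, map_mul, hεΓ σ (z τ), mul_smul]
      simp only [smul_mul', smul_inv']
      group
    rw [key, hz σ τ]
    exact aux1 (z σ) (σ • z τ) _ _
      ((comm _ hBZ (z σ)))
      (comm _ (hg σ) _)
  · refine ⟨1, Z.one_mem, fun σ => ?_⟩
    have key2 : z σ * ((g₀ * g) * ε (z σ) * (σ • (g₀ * g))⁻¹)⁻¹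
        = (z σ * (g₀ * z σ * (σ • g₀)⁻¹)⁻¹) * (z σ * (g * ε (z σ) * (σ • g)⁻¹)⁻¹) := by
      rw [smul_mul']
      exact aux2 (z σ) g₀ g (ε (z σ)) (σ • g₀) (σ • g) (comm _ (hg σ) g₀)
    rw [key2, map_mul, smul_one]
    group
end

section
/- Let Γ be a group acting on a group G by automorphisms, Z a Γ-stable central subgroup, z : Γ → G a 1-cocycle, and ε an automorphism of G commuting with the Γ-action and preserving Z. For h ∈ G and g ⋊ ε as above with ^{ḡ}ε(z̄) = z̄ (images in Ḡ = G/Z), the twisted data satisfies δ_{^h z}(h g ε(h)^{-1} ⋊ ε) = δ_z(g ⋊ ε) in H^1(Γ, Z), where δ_z(g ⋊ ε) is the class of the Z-valued cocycle ε^{-1}(z · (^g ε(z))^{-1}). -/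
/-- Invariance of `δ_z(g ⋊ ε)` under simultaneous twisting: with `Γ` acting on
`G`, `Z ≤ Z(G)` a `Γ`-stable central subgroup, `ε ∈ Aut(G)` commuting with the
`Γ`-action and preserving `Z`, `z : Γ → G` a 1-cocycle and `g` with
`^{ḡ} ε(z̄) = z̄`, one has for any `h ∈ G`:
`δ_{^h z}(h g ε(h)⁻¹ ⋊ ε) = δ_z(g ⋊ ε)` in `H¹(Γ, Z)`, i.e. the corresponding
`Z`-valued 1-cocycles (each `ε⁻¹` of `z' · (^{g'} ε(z'))⁻¹`) take values in `Z`
and differ by a coboundary `σ ↦ c⁻¹ (σ • c)` with `c ∈ Z`. -/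
theorem delta_z_twist_invariance {Γ G : Type*} [Group Γ] [Group G]
    [MulDistribMulAction Γ G]
    (Z : Subgroup G) (hZc : Z ≤ Subgroup.center G)
    (hZs : ∀ (σ : Γ), ∀ x ∈ Z, σ • x ∈ Z)
    (ε : G ≃* G) (hεΓ : ∀ (σ : Γ) (x : G), ε (σ • x) = σ • ε x)
    (hεZ : ∀ x : G, x ∈ Z ↔ ε x ∈ Z)
    (z : Γ → G) (hz : ∀ σ τ : Γ, z (σ * τ) = z σ * σ • z τ)
    (g h : G)
    (hg : ∀ σ : Γ, z σ * (g * ε (z σ) * (σ • g)⁻¹)⁻¹ ∈ Z) :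
    (∀ σ : Γ, (h * z σ * (σ • h)⁻¹) *
        ((h * g * (ε h)⁻¹) * ε (h * z σ * (σ • h)⁻¹)
          * (σ • (h * g * (ε h)⁻¹))⁻¹)⁻¹ ∈ Z) ∧
    ∃ c ∈ Z, ∀ σ : Γ,
      ε.symm ((h * z σ * (σ • h)⁻¹) *
          ((h * g * (ε h)⁻¹) * ε (h * z σ * (σ • h)⁻¹)
            * (σ • (h * g * (ε h)⁻¹))⁻¹)⁻¹)
        = ε.symm (z σ * (g * ε (z σ) * (σ • g)⁻¹)⁻¹) * (c⁻¹ * σ • c) := by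
  have key : ∀ σ : Γ, (h * z σ * (σ • h)⁻¹) *
      ((h * g * (ε h)⁻¹) * ε (h * z σ * (σ • h)⁻¹)
        * (σ • (h * g * (ε h)⁻¹))⁻¹)⁻¹
      = z σ * (g * ε (z σ) * (σ • g)⁻¹)⁻¹ := by
    intro σ
    have hcomm : h * (z σ * (g * ε (z σ) * (σ • g)⁻¹)⁻¹)
        = (z σ * (g * ε (z σ) * (σ • g)⁻¹)⁻¹) * h :=
      Subgroup.mem_center_iff.mp (hZc (hg σ)) h
    have e1 : (h * z σ * (σ • h)⁻¹) *
        ((h * g * (ε h)⁻¹) * ε (h * z σ * (σ • h)⁻¹)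
          * (σ • (h * g * (ε h)⁻¹))⁻¹)⁻¹
        = h * (z σ * (g * ε (z σ) * (σ • g)⁻¹)⁻¹) * h⁻¹ := by
      simp only [map_mul, map_inv, hεΓ, smul_mul', smul_inv']
      group
    rw [e1, hcomm, mul_assoc, mul_inv_cancel, mul_one]
  constructor
  · intro σ; rw [key σ]; exact hg σ
  · exact ⟨1, Z.one_mem, fun σ => by rw [key σ, smul_one, inv_one, one_mul, mul_one]⟩
end

section
/- Let G be a finite group, N a normal subgroup of G with G/N cyclic, and (V, σ) a finite-dimensional irreducible complex representation of N such that for every g ∈ G the representation σ^g : n ↦ σ(g^{-1} n g) is isomorphic to σ. Then σ extends to a representation of G, i.e. there exists a representation σ̃ of G on V with σ̃|_N = σ. -/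
lemma schur_aux {V : Type*} [AddCommGroup V] [Module ℂ V] [FiniteDimensional ℂ V]
    [Nontrivial V] {ι : Sort*} (σ : ι → (V →ₗ[ℂ] V))
    (hirr : ∀ U : Submodule ℂ V, (∀ i, ∀ v ∈ U, σ i v ∈ U) → U = ⊥ ∨ U = ⊤)
    (S : V →ₗ[ℂ] V) (hS : ∀ i, S * σ i = σ i * S) :
    ∃ c : ℂ, S = c • (1 : V →ₗ[ℂ] V) := by
  obtain ⟨c, hc⟩ := Module.End.exists_eigenvalue (S : Module.End ℂ V)
  obtain ⟨v, hv⟩ := hc.exists_hasEigenvector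
  refine ⟨c, ?_⟩
  set U := LinearMap.ker (S - c • (1 : V →ₗ[ℂ] V)) with hU
  have hker : ∀ w : V, w ∈ U ↔ S w = c • w := by
    intro w
    rw [hU, LinearMap.mem_ker, LinearMap.sub_apply, LinearMap.smul_apply,
      Module.End.one_apply, sub_eq_zero]
  have hinv : ∀ i, ∀ w ∈ U, σ i w ∈ U := by
    intro i w hw
    rw [hker] at hw ⊢
    have hcomm : S (σ i w) = σ i (S w) := by
      have := congrArg (fun f => f w) (hS i)
      simpa [Module.End.mul_apply] using this
    rw [hcomm, hw, map_smul]
  have hvU : v ∈ U := (hker v).2 hv.apply_eq_smul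
  rcases hirr U hinv with hbot | htop
  · exact absurd (hbot ▸ hvU) (by simpa using hv.2)
  · ext w
    have hw : w ∈ U := htop ▸ Submodule.mem_top
    rw [hker] at hw
    simpa using hw

lemma conj_zpow_aux {G : Type*} [Group G] {N : Subgroup G} (hN : N.Normal)
    {A : Type*} [Group A] (ρ : N →* A) (g : G) (t : A)
    (h1 : ∀ n : N, t * ρ n = ρ ⟨g * n * g⁻¹, hN.conj_mem (n : G) n.2 g⟩ * t) :
    ∀ (k : ℤ) (n : N), t ^ k * ρ n
      = ρ ⟨g ^ k * n * g ^ (-k), by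
          simpa [zpow_neg] using hN.conj_mem (n : G) n.2 (g ^ k)⟩ * t ^ k := by
  have hrho : ∀ (a b : N), (a : G) = (b : G) → ρ a = ρ b := fun a b h => by
    rw [Subtype.ext h]
  have h1' : ∀ n : N, t⁻¹ * ρ n = ρ ⟨g⁻¹ * n * g, by
      simpa using hN.conj_mem (n : G) n.2 g⁻¹⟩ * t⁻¹ := by
    intro n
    have hmem : g⁻¹ * (n : G) * g ∈ N := by simpa using hN.conj_mem (n : G) n.2 g⁻¹
    have h2 : t * ρ (⟨g⁻¹ * n * g, hmem⟩ : N) = ρ n * t := by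
      rw [h1 ⟨g⁻¹ * n * g, hmem⟩, hrho _ n (by simp; group)]
    calc t⁻¹ * ρ n = t⁻¹ * (ρ n * t) * t⁻¹ := by group
      _ = t⁻¹ * (t * ρ (⟨g⁻¹ * n * g, hmem⟩ : N)) * t⁻¹ := by rw [h2]
      _ = ρ (⟨g⁻¹ * n * g, hmem⟩ : N) * t⁻¹ := by group
  intro k
  induction k using Int.induction_on with
  | zero => intro n; simp only [zpow_zero, one_mul, mul_one]
            exact hrho _ _ (by simp)
  | succ k ih =>
    intro n
    have e1 : t ^ ((k : ℤ) + 1) = t ^ (k : ℤ) * t := by rw [zpow_add, zpow_one]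
    rw [e1, mul_assoc, h1 n, ← mul_assoc, ih, mul_assoc]
    congr 1
    apply hrho
    simp only []
    push_cast [zpow_add, zpow_neg, zpow_one]
    group
  | pred k ih =>
    intro n
    have e1 : t ^ (-(k : ℤ) - 1) = t ^ (-(k : ℤ)) * t⁻¹ := by
      rw [zpow_sub, zpow_one, zpow_neg]
    rw [e1, mul_assoc, h1' n, ← mul_assoc, ih, mul_assoc]
    congr 1
    apply hrho
    simp only []
    push_cast [zpow_sub, zpow_neg, zpow_one, zpow_add]
    group

/-- Clifford theory: let `G` be a finite group, `N ⊴ G` with `G/N` cyclic, and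
`(V, σ)` a finite-dimensional irreducible complex representation of `N` that is
`G`-stable (for every `g ∈ G`, `σ^g : n ↦ σ(g⁻¹ n g)` is isomorphic to `σ`).
Then `σ` extends to a representation of `G` on `V`. -/
theorem stable_irreducible_extends_of_cyclic_quotient
    {G : Type*} [Group G] [Finite G] (N : Subgroup G) [hN : N.Normal]
    [IsCyclic (G ⧸ N)]
    {V : Type*} [AddCommGroup V] [Module ℂ V] [FiniteDimensional ℂ V]
    [Nontrivial V]
    (σ : N →* (V →ₗ[ℂ] V))
    (hirr : ∀ U : Submodule ℂ V, (∀ (n : N), ∀ v ∈ U, σ n v ∈ U) → U = ⊥ ∨ U = ⊤)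
    (hstable : ∀ g : G, ∃ T : V ≃ₗ[ℂ] V, ∀ (n : N) (v : V),
      T (σ n v) = σ ⟨g⁻¹ * n * g, by simpa using hN.conj_mem (n : G) n.2 g⁻¹⟩ (T v)) :
    ∃ σt : G →* (V →ₗ[ℂ] V), ∀ n : N, σt (n : G) = σ n := by
  classical
  haveI : Finite (G ⧸ N) := Quotient.finite _
  obtain ⟨ζ, hζ⟩ := IsCyclic.exists_generator (α := G ⧸ N)
  obtain ⟨g, hgζ⟩ := QuotientGroup.mk_surjective ζ
  have hg : ∀ x : G, ∃ m : ℤ,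
      (QuotientGroup.mk x : G ⧸ N) = (QuotientGroup.mk g : G ⧸ N) ^ m := by
    intro x
    obtain ⟨m, hm⟩ := hζ (QuotientGroup.mk x)
    exact ⟨m, by rw [← hm, hgζ]⟩
  set ρ : N →* (V →ₗ[ℂ] V)ˣ := σ.toHomUnits with hρdef
  have hρval : ∀ n : N, ((ρ n : (V →ₗ[ℂ] V)ˣ) : V →ₗ[ℂ] V) = σ n := fun n => rfl
  have hrho : ∀ (a b : N), (a : G) = (b : G) → ρ a = ρ b := fun a b h => by
    rw [Subtype.ext h]
  have hσ : ∀ (a b : N), (a : G) = (b : G) → ∀ v : V, σ a v = σ b v := fun a b h v => by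
    rw [Subtype.ext h]
  set d : ℕ := orderOf (QuotientGroup.mk g : G ⧸ N) with hddef
  have hd0 : 0 < d := orderOf_pos _
  have hdvd : ∀ m : ℤ, g ^ m ∈ N ↔ (d : ℤ) ∣ m := by
    intro m
    rw [← QuotientGroup.eq_one_iff, QuotientGroup.mk_zpow, hddef,
      ← orderOf_dvd_iff_zpow_eq_one]
  have hgd : g ^ (d : ℤ) ∈ N := (hdvd _).2 dvd_rfl
  set gd : N := ⟨g ^ (d : ℤ), hgd⟩ with hgddef
  -- the intertwiner as a unit
  obtain ⟨T, hT⟩ := hstable g⁻¹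
  set t0 : (V →ₗ[ℂ] V)ˣ :=
    ⟨T.toLinearMap, T.symm.toLinearMap,
      by ext v; simp [Module.End.mul_apply], by ext v; simp [Module.End.mul_apply]⟩ with ht0def
  have ht0 : ∀ n : N, t0 * ρ n = ρ ⟨g * n * g⁻¹, hN.conj_mem (n : G) n.2 g⟩ * t0 := by
    intro n
    refine Units.ext ?_
    ext v
    show T (σ n v) = σ ⟨g * n * g⁻¹, hN.conj_mem (n : G) n.2 g⟩ (T v)
    rw [hT n v]
    exact hσ _ _ (by simp) _
  have ht0k := conj_zpow_aux hN ρ g t0 ht0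
  -- Schur : (ρ gd)⁻¹ * t0 ^ d is a scalar
  set S : (V →ₗ[ℂ] V)ˣ := (ρ gd)⁻¹ * t0 ^ (d : ℤ) with hSdef
  have hmemd : ∀ n : N, g ^ (d : ℤ) * (n : G) * g ^ (-(d : ℤ)) ∈ N := fun n => by
    simpa [zpow_neg] using hN.conj_mem (n : G) n.2 (g ^ (d : ℤ))
  have hScomm : ∀ n : N, S * ρ n = ρ n * S := by
    intro n
    calc S * ρ n = (ρ gd)⁻¹ * (t0 ^ (d : ℤ) * ρ n) := by rw [hSdef, mul_assoc]
      _ = (ρ gd)⁻¹ * (ρ ⟨g ^ (d : ℤ) * n * g ^ (-(d : ℤ)), hmemd n⟩ * t0 ^ (d : ℤ)) := by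
          rw [ht0k (d : ℤ) n]
      _ = ρ gd⁻¹ * ρ ⟨g ^ (d : ℤ) * n * g ^ (-(d : ℤ)), hmemd n⟩ * t0 ^ (d : ℤ) := by
          rw [map_inv]; exact (mul_assoc _ _ _).symm
      _ = ρ (gd⁻¹ * ⟨g ^ (d : ℤ) * n * g ^ (-(d : ℤ)), hmemd n⟩) * t0 ^ (d : ℤ) := by
          rw [map_mul]
      _ = ρ (n * gd⁻¹) * t0 ^ (d : ℤ) := by
          rw [hrho (gd⁻¹ * ⟨g ^ (d : ℤ) * n * g ^ (-(d : ℤ)), hmemd n⟩) (n * gd⁻¹)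
            (by show (g ^ (d : ℤ))⁻¹ * (g ^ (d : ℤ) * (n : G) * g ^ (-(d : ℤ)))
                  = (n : G) * (g ^ (d : ℤ))⁻¹
                rw [zpow_neg]; group)]
      _ = ρ n * S := by rw [map_mul, map_inv, hSdef, mul_assoc]
  have hSval : ∀ n : N, (S : V →ₗ[ℂ] V) * σ n = σ n * (S : V →ₗ[ℂ] V) := by
    intro n
    have := congrArg (Units.val) (hScomm n)
    simpa [hρval] using this
  obtain ⟨c, hc⟩ := schur_aux σ hirr (S : V →ₗ[ℂ] V) hSval
  have hc0 : c ≠ 0 := by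
    intro h0
    obtain ⟨v, hv⟩ := exists_ne (0 : V)
    have h1 : (S : V →ₗ[ℂ] V) * ((S⁻¹ : (V →ₗ[ℂ] V)ˣ) : V →ₗ[ℂ] V) = 1 := by
      rw [← Units.val_mul, mul_inv_cancel, Units.val_one]
    rw [hc, h0, zero_smul, zero_mul] at h1
    have := congrArg (fun f => f v) h1
    simp at this
    exact hv this.symm
  -- normalize the intertwiner
  obtain ⟨b, hb⟩ := IsAlgClosed.exists_pow_nat_eq (k := ℂ) c⁻¹ hd0
  have hb0 : b ≠ 0 := by
    intro h0
    rw [h0, zero_pow hd0.ne'] at hb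
    exact hc0 (by simpa [inv_eq_zero] using hb.symm)
  set cb : (V →ₗ[ℂ] V)ˣ :=
    Units.map (algebraMap ℂ (V →ₗ[ℂ] V)).toMonoidHom (Units.mk0 b hb0) with hcbdef
  have hcbval : (cb : V →ₗ[ℂ] V) = algebraMap ℂ (V →ₗ[ℂ] V) b := rfl
  have hcbcomm : ∀ u : (V →ₗ[ℂ] V)ˣ, Commute cb u := by
    intro u
    refine Units.ext ?_
    show (cb : V →ₗ[ℂ] V) * u = u * (cb : V →ₗ[ℂ] V)
    rw [hcbval]
    exact Algebra.commutes b (u : V →ₗ[ℂ] V)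
  set t : (V →ₗ[ℂ] V)ˣ := cb * t0 with htdef
  have ht : ∀ n : N, t * ρ n = ρ ⟨g * n * g⁻¹, hN.conj_mem (n : G) n.2 g⟩ * t := by
    intro n
    rw [htdef, mul_assoc, ht0 n, ← mul_assoc, (hcbcomm _).eq, mul_assoc]
  have htk := conj_zpow_aux hN ρ g t ht
  -- t ^ d = ρ gd
  have htd : t ^ (d : ℕ) = ρ gd := by
    have e2 : t0 ^ (d : ℤ) = ρ gd * S := by rw [hSdef]; group
    have e3 : t0 ^ (d : ℕ) = ρ gd * S := by rw [← zpow_natCast t0 d, e2]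
    have e4 : S * cb ^ (d : ℕ) = 1 := by
      refine Units.ext ?_
      rw [Units.val_one]
      calc ((S * cb ^ (d : ℕ) : (V →ₗ[ℂ] V)ˣ) : V →ₗ[ℂ] V)
          = (c • 1) * (algebraMap ℂ (V →ₗ[ℂ] V) b) ^ (d : ℕ) := by
            rw [Units.val_mul, hc, Units.val_pow_eq_pow_val, hcbval]
        _ = (c • 1) * ((b ^ (d : ℕ)) • (1 : V →ₗ[ℂ] V)) := by
            rw [← map_pow, Algebra.algebraMap_eq_smul_one]
        _ = 1 := by
            rw [hb, smul_mul_smul_comm, mul_one, mul_inv_cancel₀ hc0, one_smul]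
    calc t ^ (d : ℕ) = cb ^ (d : ℕ) * t0 ^ (d : ℕ) := by
          rw [htdef, (hcbcomm t0).mul_pow]
      _ = cb ^ (d : ℕ) * (ρ gd * S) := by rw [e3]
      _ = (ρ gd * S) * cb ^ (d : ℕ) := ((hcbcomm (ρ gd * S)).pow_left d).eq
      _ = ρ gd * (S * cb ^ (d : ℕ)) := by rw [mul_assoc]
      _ = ρ gd := by rw [e4, mul_one]
  have htm : ∀ (m : ℤ) (hm : g ^ m ∈ N), t ^ m = ρ ⟨g ^ m, hm⟩ := by
    intro m hm
    obtain ⟨q, rfl⟩ := (hdvd m).1 hm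
    have e1 : t ^ ((d : ℤ) * q) = (t ^ (d : ℕ)) ^ q := by
      rw [← zpow_natCast t d, ← zpow_mul]
    rw [e1, htd, ← map_zpow]
    apply hrho
    push_cast
    rw [← zpow_mul]
  -- membership of the remainder
  have memN : ∀ (x : G) (m : ℤ),
      (QuotientGroup.mk x : G ⧸ N) = (QuotientGroup.mk g : G ⧸ N) ^ m →
        g ^ (-m) * x ∈ N := by
    intro x m h
    rw [← QuotientGroup.eq_one_iff]
    rw [QuotientGroup.mk_mul, QuotientGroup.mk_zpow, h, zpow_neg, inv_mul_cancel]
  choose kk hkk using hg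
  set f : G → (V →ₗ[ℂ] V)ˣ :=
    fun x => t ^ kk x * ρ ⟨g ^ (-(kk x)) * x, memN x (kk x) (hkk x)⟩ with hfdef
  have f_eq : ∀ (x : G) (m : ℤ)
      (hm : (QuotientGroup.mk x : G ⧸ N) = (QuotientGroup.mk g : G ⧸ N) ^ m),
      f x = t ^ m * ρ ⟨g ^ (-m) * x, memN x m hm⟩ := by
    intro x m hm
    have hdm : g ^ (m - kk x) ∈ N := by
      refine (hdvd _).2 ?_
      rw [hddef, orderOf_dvd_iff_zpow_eq_one, zpow_sub, ← hm, ← hkk x, mul_inv_cancel]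
    have hsplit : (⟨g ^ (-(kk x)) * x, memN x (kk x) (hkk x)⟩ : N)
        = ⟨g ^ (m - kk x), hdm⟩ * ⟨g ^ (-m) * x, memN x m hm⟩ := by
      refine Subtype.ext ?_
      show g ^ (-(kk x)) * x = g ^ (m - kk x) * (g ^ (-m) * x)
      rw [← mul_assoc, ← zpow_add]
      have : m - kk x + -m = -(kk x) := by ring
      rw [this]
    show t ^ kk x * ρ ⟨g ^ (-(kk x)) * x, memN x (kk x) (hkk x)⟩
        = t ^ m * ρ ⟨g ^ (-m) * x, memN x m hm⟩
    rw [hsplit, map_mul, ← htm (m - kk x) hdm, ← mul_assoc, ← zpow_add]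
    have : kk x + (m - kk x) = m := by ring
    rw [this]
  have hmul : ∀ x y : G, f (x * y) = f x * f y := by
    intro x y
    have hxy : (QuotientGroup.mk (x * y) : G ⧸ N)
        = (QuotientGroup.mk g : G ⧸ N) ^ (kk x + kk y) := by
      rw [QuotientGroup.mk_mul, hkk x, hkk y, zpow_add]
    have hmem2 : g ^ (-(kk y)) * ((⟨g ^ (-(kk x)) * x, memN x (kk x) (hkk x)⟩ : N) : G)
        * g ^ (kk y) ∈ N := by
      simpa [zpow_neg] using
        hN.conj_mem _ (memN x (kk x) (hkk x)) (g ^ (-(kk y)))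
    have hstep : t ^ kk y * ρ ⟨g ^ (-(kk y)) * ((⟨g ^ (-(kk x)) * x,
          memN x (kk x) (hkk x)⟩ : N) : G) * g ^ (kk y), hmem2⟩
        = ρ ⟨g ^ (-(kk x)) * x, memN x (kk x) (hkk x)⟩ * t ^ kk y := by
      rw [htk (kk y) _]
      congr 1
      apply hrho
      show g ^ (kk y) * (g ^ (-(kk y)) * (g ^ (-(kk x)) * x) * g ^ (kk y)) * g ^ (-(kk y))
          = g ^ (-(kk x)) * x
      group
    rw [f_eq (x * y) (kk x + kk y) hxy]
    show t ^ (kk x + kk y) * ρ ⟨g ^ (-(kk x + kk y)) * (x * y), memN _ _ hxy⟩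
        = (t ^ kk x * ρ ⟨g ^ (-(kk x)) * x, memN x (kk x) (hkk x)⟩)
          * (t ^ kk y * ρ ⟨g ^ (-(kk y)) * y, memN y (kk y) (hkk y)⟩)
    rw [mul_assoc, ← mul_assoc (ρ ⟨g ^ (-(kk x)) * x, memN x (kk x) (hkk x)⟩),
      ← hstep, mul_assoc (t ^ kk y), ← map_mul, ← mul_assoc (t ^ kk x) (t ^ kk y), ← zpow_add]
    congr 1
    apply hrho
    show g ^ (-(kk x + kk y)) * (x * y)
        = (g ^ (-(kk y)) * (g ^ (-(kk x)) * x) * g ^ (kk y)) * (g ^ (-(kk y)) * y)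
    rw [zpow_neg, zpow_add]
    group
  refine ⟨(Units.coeHom (V →ₗ[ℂ] V)).comp (MonoidHom.mk' f hmul), ?_⟩
  intro n
  show ((f (n : G) : (V →ₗ[ℂ] V)ˣ) : V →ₗ[ℂ] V) = σ n
  have h1 : (QuotientGroup.mk (n : G) : G ⧸ N) = (QuotientGroup.mk g : G ⧸ N) ^ (0 : ℤ) := by
    rw [zpow_zero, QuotientGroup.eq_one_iff]
    exact n.2
  rw [f_eq (n : G) 0 h1, zpow_zero, one_mul, hrho _ n (by simp)]
  exact hρval n
end

section
/- Let G be a finite group with subgroups N ≤ M ≤ G, where N is normal in G. Let ρ be an irreducible complex representation of N and ρ' an irreducible complex representation of G such that ρ occurs in ρ'|_N with multiplicity exactly one. Then there exists a unique (up to isomorphism) irreducible representation ρ_M of M such that ρ_M occurs in ρ'|_M and ρ occurs in ρ_M|_N. -/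
variable {G : Type*} [Group G] [Finite G]
variable {V W : Type*} [AddCommGroup V] [Module ℂ V] [AddCommGroup W] [Module ℂ W]

/-- `U` realizes "an irreducible representation `ρ_M` of `M` occurring in
`ρ'|_M` and containing `ρ` on restriction to `N`": `U` is an `M`-invariant
nonzero subspace of `W`, irreducible under `M`, admitting a nonzero
`N`-equivariant map from `V` with range inside `U`. -/
def GoodSub (N M : Subgroup G) (ρ : N →* (V →ₗ[ℂ] V)) (ρ' : G →* (W →ₗ[ℂ] W))
    (U : Submodule ℂ W) : Prop :=
  (∀ m : M, ∀ w ∈ U, ρ' (m : G) w ∈ U) ∧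
  U ≠ ⊥ ∧
  (∀ U' : Submodule ℂ W, U' ≤ U →
      (∀ m : M, ∀ w ∈ U', ρ' (m : G) w ∈ U') → U' = ⊥ ∨ U' = U) ∧
  (∃ f : V →ₗ[ℂ] W, f ≠ 0 ∧ LinearMap.range f ≤ U ∧
      ∀ n : N, f ∘ₗ ρ n = ρ' (n : G) ∘ₗ f)

/-- Let `N ≤ M ≤ G` be finite groups with `N ⊴ G`, `ρ` an irreducible complex
representation of `N`, `ρ'` an irreducible complex representation of `G`, such
that `ρ` occurs in `ρ'|_N` with multiplicity exactly one.  Then there exists an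
irreducible representation `ρ_M` of `M` occurring in `ρ'|_M` whose restriction
to `N` contains `ρ`, and it is unique up to (`M`-equivariant) isomorphism. -/
theorem unique_sandwich_representation (N M : Subgroup G) [N.Normal]
    (hNM : N ≤ M)
    [FiniteDimensional ℂ V] [Nontrivial V] [FiniteDimensional ℂ W] [Nontrivial W]
    (ρ : N →* (V →ₗ[ℂ] V)) (ρ' : G →* (W →ₗ[ℂ] W))
    (hρirr : ∀ U : Submodule ℂ V, (∀ n : N, ∀ v ∈ U, ρ n v ∈ U) → U = ⊥ ∨ U = ⊤)
    (hρ'irr : ∀ U : Submodule ℂ W, (∀ g : G, ∀ w ∈ U, ρ' g w ∈ U) → U = ⊥ ∨ U = ⊤)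
    (hmult : ∃ f : V →ₗ[ℂ] W, ((∀ n : N, f ∘ₗ ρ n = ρ' (n : G) ∘ₗ f) ∧ f ≠ 0) ∧
      ∀ g : V →ₗ[ℂ] W, (∀ n : N, g ∘ₗ ρ n = ρ' (n : G) ∘ₗ g) → ∃ c : ℂ, g = c • f) :
    (∃ U : Submodule ℂ W, GoodSub N M ρ ρ' U) ∧
    (∀ (U₁ U₂ : Submodule ℂ W) (h₁ : GoodSub N M ρ ρ' U₁)
        (_h₂ : GoodSub N M ρ ρ' U₂),
      ∃ e : U₁ ≃ₗ[ℂ] U₂, ∀ (m : M) (v : U₁),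
        (e ⟨ρ' (m : G) v, h₁.1 m v v.2⟩ : W) = ρ' (m : G) (e v)) := by
  classical
  obtain ⟨f, ⟨hfN, hf0⟩, huniq⟩ := hmult
  haveI : Fintype M := Fintype.ofFinite M
  set U₀ : Submodule ℂ W := ⨆ m : M, (LinearMap.range f).map (ρ' (m : G)) with hU₀def
  have hrange_le : LinearMap.range f ≤ U₀ := by
    have h := le_iSup (fun m : M => (LinearMap.range f).map (ρ' (m : G))) 1
    have h1 : Submodule.map (ρ' ((1 : M) : G)) (LinearMap.range f) = LinearMap.range f := by
      ext w
      simp [Module.End.one_apply]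
    rw [h1] at h
    exact h
  have hmono : ∀ m₀ : M, ∀ w ∈ U₀, ρ' (m₀ : G) w ∈ U₀ := by
    intro m₀ w hw
    have hle : Submodule.map (ρ' (m₀ : G)) U₀ ≤ U₀ := by
      rw [hU₀def, Submodule.map_iSup]
      refine iSup_le fun m => ?_
      rw [← Submodule.map_comp, ← Module.End.mul_eq_comp, ← map_mul, ← Subgroup.coe_mul]
      exact le_iSup (fun m : M => (LinearMap.range f).map (ρ' (m : G))) (m₀ * m)
    exact hle (Submodule.mem_map_of_mem hw)
  have hleast : ∀ U : Submodule ℂ W, LinearMap.range f ≤ U →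
      (∀ m : M, ∀ w ∈ U, ρ' (m : G) w ∈ U) → U₀ ≤ U := by
    intro U hU hUinv
    refine iSup_le fun m => Submodule.map_le_iff_le_comap.mpr ?_
    rintro w ⟨v, rfl⟩
    exact hUinv m (f v) (hU ⟨v, rfl⟩)
  have hne : U₀ ≠ ⊥ := by
    intro h
    apply hf0
    ext v
    have hv := hrange_le ⟨v, rfl⟩
    rw [h] at hv
    simpa using hv
  have hcard : (Fintype.card M : ℂ) ≠ 0 := Nat.cast_ne_zero.mpr Fintype.card_ne_zero
  have hirr : ∀ U' : Submodule ℂ W, U' ≤ U₀ →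
      (∀ m : M, ∀ w ∈ U', ρ' (m : G) w ∈ U') → U' = ⊥ ∨ U' = U₀ := by
    intro U' hle hinv
    obtain ⟨q, hq⟩ := Submodule.exists_isCompl U'
    set π : W →ₗ[ℂ] W := U'.subtype ∘ₗ (U'.projectionOnto q hq) with hπ
    have hπmem : ∀ w, π w ∈ U' := fun w => (U'.projectionOnto q hq w).2
    have hπid : ∀ w ∈ U', π w = w := by
      intro w hw
      have h := Submodule.linearProjOfIsCompl_apply_left hq ⟨w, hw⟩
      simp only [hπ, LinearMap.comp_apply]
      rw [show w = ((⟨w, hw⟩ : U') : W) from rfl, h]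
      rfl
    set c : ℂ := (Fintype.card M : ℂ)⁻¹ with hc
    set p : W →ₗ[ℂ] W := c • ∑ m : M, ρ' (m : G) * π * ρ' ((m⁻¹ : M) : G) with hp
    have hpmem : ∀ w, p w ∈ U' := by
      intro w
      simp only [hp, LinearMap.smul_apply, LinearMap.sum_apply, Module.End.mul_apply]
      exact Submodule.smul_mem _ _ (Submodule.sum_mem _ fun m _ => hinv m _ (hπmem _))
    have hpid : ∀ w ∈ U', p w = w := by
      intro w hw
      simp only [hp, LinearMap.smul_apply, LinearMap.sum_apply, Module.End.mul_apply]
      have hterm : ∀ m : M, ρ' (m : G) (π (ρ' ((m⁻¹ : M) : G) w)) = w := by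
        intro m
        rw [hπid _ (hinv m⁻¹ w hw), ← Module.End.mul_apply, ← map_mul]
        simp
      rw [Finset.sum_congr rfl fun m _ => hterm m, Finset.sum_const, Finset.card_univ,
        ← Nat.cast_smul_eq_nsmul ℂ, smul_smul, hc, inv_mul_cancel₀ hcard, one_smul]
    have hequi : ∀ m₀ : M, p * ρ' (m₀ : G) = ρ' (m₀ : G) * p := by
      intro m₀
      simp only [hp, Algebra.smul_mul_assoc, Algebra.mul_smul_comm, Finset.sum_mul,
        Finset.mul_sum]
      congr 1
      refine Fintype.sum_equiv (Equiv.mulLeft m₀⁻¹) _ _ ?_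
      intro x
      simp only [Equiv.coe_mulLeft, Subgroup.coe_mul, InvMemClass.coe_inv, mul_inv_rev,
        inv_inv, map_mul, ← mul_assoc]
      rw [show ρ' (m₀ : G) * ρ' ((m₀ : G)⁻¹) = 1 by rw [← map_mul, mul_inv_cancel, map_one],
        one_mul]
    have hpf : ∀ n : N, (p ∘ₗ f) ∘ₗ ρ n = ρ' (n : G) ∘ₗ (p ∘ₗ f) := by
      intro n
      have h2 : p * ρ' (n : G) = ρ' (n : G) * p := hequi ⟨(n : G), hNM n.2⟩
      rw [LinearMap.comp_assoc, hfN n, ← LinearMap.comp_assoc, ← Module.End.mul_eq_comp p,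
        h2, Module.End.mul_eq_comp, LinearMap.comp_assoc]
    obtain ⟨a, ha⟩ := huniq (p ∘ₗ f) hpf
    by_cases ha0 : a = 0
    · left
      rw [ha0, zero_smul] at ha
      have hker : ∀ v : V, p (f v) = 0 := by
        intro v
        have := congrFun (congrArg DFunLike.coe ha) v
        simpa using this
      have hkerU : U₀ ≤ LinearMap.ker p := by
        refine hleast _ ?_ ?_
        · rintro w ⟨v, rfl⟩
          exact hker v
        · intro m w hw
          have h2 := hequi m
          have : p (ρ' (m : G) w) = ρ' (m : G) (p w) := by
            rw [← Module.End.mul_apply, h2, Module.End.mul_apply]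
          rw [LinearMap.mem_ker] at hw ⊢
          rw [this, hw, map_zero]
      rw [eq_bot_iff]
      intro w hw
      have : p w = 0 := hkerU (hle hw)
      rw [hpid w hw] at this
      simpa using this
    · right
      have hfU' : LinearMap.range f ≤ U' := by
        rintro w ⟨v, rfl⟩
        have h1 : p (f v) = a • f v := by
          have := congrFun (congrArg DFunLike.coe ha) v
          simpa using this
        have h2 : f v = a⁻¹ • p (f v) := by
          rw [h1, smul_smul, inv_mul_cancel₀ ha0, one_smul]
        rw [h2]
        exact Submodule.smul_mem _ _ (hpmem _)
      exact le_antisymm hle (hleast U' hfU' hinv)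
  have hgood : GoodSub N M ρ ρ' U₀ := ⟨hmono, hne, hirr, f, hf0, hrange_le, hfN⟩
  have huniqU : ∀ U : Submodule ℂ W, GoodSub N M ρ ρ' U → U = U₀ := by
    intro U hU
    obtain ⟨hUinv, hUne, hUirr, g, hg0, hgrange, hgN⟩ := hU
    obtain ⟨a, ha⟩ := huniq g hgN
    have ha0 : a ≠ 0 := by
      rintro rfl
      rw [zero_smul] at ha
      exact hg0 ha
    have hfU : LinearMap.range f ≤ U := by
      rintro w ⟨v, rfl⟩
      have h1 : g v = a • f v := by rw [ha]; simp
      have h2 : f v = a⁻¹ • g v := by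
        rw [h1, smul_smul, inv_mul_cancel₀ ha0, one_smul]
      rw [h2]
      exact Submodule.smul_mem _ _ (hgrange ⟨v, rfl⟩)
    rcases hUirr U₀ (hleast U hfU hUinv) hmono with h | h
    · exact absurd h hne
    · exact h.symm
  refine ⟨⟨U₀, hgood⟩, ?_⟩
  intro U₁ U₂ h₁ h₂
  have e12 : U₁ = U₂ := (huniqU U₁ h₁).trans (huniqU U₂ h₂).symm
  refine ⟨LinearEquiv.ofEq U₁ U₂ e12, ?_⟩
  intro m v
  simp [LinearEquiv.coe_ofEq_apply]
end
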